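/- Let n ≥ 1, let Ω ⊆ ℝ^n be open, let k_{ij} : ℝ^n → ℝ be C¹, let h : Ω → ℝ, and let ε > 0. Suppose: (a) T^ε : Ω → ℝ is C² and satisfies −∂_i( k_{ij}(x/ε) ∂_j T^ε )(x) = h(x) on Ω; (b) T⁽⁰⁾ : Ω → ℝ is C³ and satisfies the homogenized equation −k̂_{ij} ∂_i∂_j T⁽⁰⁾(x) = h(x) on Ω for constants k̂_{ij}; (c) for each α, M_α : ℝ^n → ℝ is C² and satisfies ∂_{y_i}( k_{ij}(y) ∂_{y_j}M_α(y) ) = −∂_{y_i}k_{iα}(y) for all y. Define the first-order two-scale approximation T^{(1ε)}(x) = T⁽⁰⁾(x) + ε M_α(x/ε) ∂_α T⁽⁰⁾(x) and the residual T_Δ^{(1ε)} = T^ε − T^{(1ε)}. Then for every x ∈ Ω, −∂_i( k_{ij}(x/ε) ∂_j T_Δ^{(1ε)} )(x) = F₀(x, x/ε) + ε F₁(x, x/ε), where (with Einstein summation, ∂_{x_i} acting on x-arguments and ∂_{y_i} on y-arguments) F₀(x,y) = −k̂_{ij} ∂_{x_i}∂_{x_j}T⁽⁰⁾(x) + ∂_{x_i}(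 k_{ij}(y) ∂_{x_j}T⁽⁰⁾(x) ) + ∂_{x_i}( k_{ij}(y) ∂_{y_j}( M_α(y) ∂_{x_α}T⁽⁰⁾(x) ) ) + ∂_{y_i}( k_{ij}(y) ∂_{x_j}( M_α(y) ∂_{x_α}T⁽⁰⁾(x) ) ) and F₁(x,y) = ∂_{x_i}( k_{ij}(y) ∂_{x_j}( M_α(y) ∂_{x_α}T⁽⁰⁾(x) ) ). -/

import Mathlib

/-!
Write the flux of the two-scale approximation as `Φ_i(x, x/ε)`. By the chain rule
`∂_i[Φ_i(x, x/ε)] = (∂_{x_i}Φ_i)(x, x/ε) + ε⁻¹ (∂_{y_i}Φ_i)(x, x/ε)`. The `ε⁻¹`-order part of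
`∂_{y_i}Φ_i` is `∂_{y_i}(k_ij (δ_jα + ∂_{y_j}M_α)) ∂_α T⁰`, which vanishes by the cell equations, so
`ε⁻¹ ∂_{y_i}Φ_i` contributes only the last term of `F₀`. The heterogeneous equation turns the
divergence of the flux of `T^ε` into `h = -k̂_ij ∂_i∂_j T⁰`, and the `x`-derivatives of `Φ_i` give
the remaining terms of `F₀ + ε F₁`.
-/

open scoped BigOperators

/-- Partial derivative of `f : ℝ^n → ℝ` in the `i`-th coordinate direction. -/
noncomputable def pd {n : ℕ} (i : Fin n) (f : (Fin n → ℝ) → ℝ) (y : Fin n → ℝ) : ℝ :=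
  fderiv ℝ f y (Pi.single i 1)

open Filter Topology

section PartialDerivative

variable {n : ℕ} {i : Fin n} {f g : (Fin n → ℝ) → ℝ} {x : Fin n → ℝ}

theorem pd_congr_of_eventuallyEq (h : f =ᶠ[𝓝 x] g) : pd i f x = pd i g x := by
  rw [pd, pd, h.fderiv_eq]

theorem pd_add (hf : DifferentiableAt ℝ f x) (hg : DifferentiableAt ℝ g x) :
    pd i (fun x => f x + g x) x = pd i f x + pd i g x := by
  rw [pd, fderiv_fun_add hf hg]; rfl

theorem pd_sub (hf : DifferentiableAt ℝ f x) (hg : DifferentiableAt ℝ g x) :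
    pd i (fun x => f x - g x) x = pd i f x - pd i g x := by
  rw [pd, fderiv_fun_sub hf hg]; rfl

theorem pd_const_mul (c : ℝ) (hf : DifferentiableAt ℝ f x) :
    pd i (fun x => c * f x) x = c * pd i f x := by
  rw [pd, fderiv_const_mul hf]; rfl

theorem pd_mul_const (c : ℝ) (hf : DifferentiableAt ℝ f x) :
    pd i (fun x => f x * c) x = pd i f x * c := by
  rw [pd, fderiv_mul_const hf]; simp [pd, mul_comm]

theorem pd_sum {ι : Type*} {s : Finset ι} {F : ι → (Fin n → ℝ) → ℝ}
    (hF : ∀ a ∈ s, DifferentiableAt ℝ (F a) x) :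
    pd i (fun x => ∑ a ∈ s, F a x) x = ∑ a ∈ s, pd i (F a) x := by
  rw [pd, fderiv_fun_sum hF]; simp [pd]

theorem ContDiffAt.pd {m : ℕ} (hf : ContDiffAt ℝ (m + 1) f x) (i : Fin n) :
    ContDiffAt ℝ m (pd i f) x :=
  (ContinuousLinearMap.apply ℝ ℝ (Pi.single i 1 : Fin n → ℝ)).contDiff.contDiffAt.comp x
    (hf.fderiv_right le_rfl)

theorem ContDiff.pd {m : ℕ} (hf : ContDiff ℝ (m + 1) f) (i : Fin n) : ContDiff ℝ m (pd i f) :=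
  contDiff_iff_contDiffAt.2 fun _ => hf.contDiffAt.pd i

theorem DifferentiableAt.comp_two_scale {Φ : (Fin n → ℝ) → (Fin n → ℝ) → ℝ} (c : ℝ)
    (hΦ : DifferentiableAt ℝ (Function.uncurry Φ) (x, c • x)) :
    DifferentiableAt ℝ (fun x' => Φ x' (c • x')) x :=
  hΦ.comp x (f := fun x' => (x', c • x')) (by fun_prop)

theorem pd_comp_two_scale {Φ : (Fin n → ℝ) → (Fin n → ℝ) → ℝ} (c : ℝ)
    (hΦ : DifferentiableAt ℝ (Function.uncurry Φ) (x, c • x)) :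
    pd i (fun x' => Φ x' (c • x')) x
      = pd i (fun x' => Φ x' (c • x)) x + c * pd i (Φ x) (c • x) := by
  set D := fderiv ℝ (Function.uncurry Φ) (x, c • x)
  have hD : HasFDerivAt (Function.uncurry Φ) D (x, c • x) := hΦ.hasFDerivAt
  let I := ContinuousLinearMap.id ℝ (Fin n → ℝ)
  have hdiag : HasFDerivAt (fun x' => Φ x' (c • x')) (D.comp (I.prod (c • I))) x :=
    hD.comp x (f := fun x' => (x', c • x'))
      ((hasFDerivAt_id x).prodMk ((hasFDerivAt_id x).const_smul c))
  have hfst : HasFDerivAt (fun x' => Φ x' (c • x)) (D.comp (I.prod 0)) x :=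
    hD.comp x (f := fun x' => (x', c • x)) ((hasFDerivAt_id x).prodMk (hasFDerivAt_const _ x))
  have hsnd : HasFDerivAt (Φ x) (D.comp ((0 : (Fin n → ℝ) →L[ℝ] _).prod I)) (c • x) :=
    hD.comp (c • x) (f := fun y => (x, y)) ((hasFDerivAt_const _ _).prodMk (hasFDerivAt_id _))
  rw [pd, pd, pd, hdiag.fderiv, hfst.fderiv, hsnd.fderiv]
  simp only [ContinuousLinearMap.comp_apply, ContinuousLinearMap.prod_apply]
  rw [← smul_eq_mul, ← map_smul, ← map_add]
  congr 1
  simp [I]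

theorem pd_sum_mul_const {ι : Type*} {s : Finset ι} {F : ι → (Fin n → ℝ) → ℝ} (a : ι → ℝ)
    (hF : ∀ α ∈ s, DifferentiableAt ℝ (F α) x) :
    pd i (fun x => ∑ α ∈ s, F α x * a α) x = ∑ α ∈ s, pd i (F α) x * a α := by
  rw [pd_sum fun α hα => (hF α hα).mul_const _]
  exact Finset.sum_congr rfl fun α hα => pd_mul_const _ (hF α hα)

theorem pd_sum_const_mul {ι : Type*} {s : Finset ι} {F : ι → (Fin n → ℝ) → ℝ} (a : ι → ℝ)
    (hF : ∀ α ∈ s, DifferentiableAt ℝ (F α) x) :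
    pd i (fun x => ∑ α ∈ s, a α * F α x) x = ∑ α ∈ s, a α * pd i (F α) x := by
  rw [pd_sum fun α hα => (hF α hα).const_mul _]
  exact Finset.sum_congr rfl fun α hα => pd_const_mul _ (hF α hα)

end PartialDerivative

section TwoScale

variable {n : ℕ} {k : Fin n → Fin n → (Fin n → ℝ) → ℝ} {M : Fin n → (Fin n → ℝ) → ℝ}
  {T0 : (Fin n → ℝ) → ℝ} {ε : ℝ} {x y : Fin n → ℝ}

/-- The flux `k(y) ∇T^{(1ε)}` in the slow variable `x` and the fast variable `y`:
`k_ij(y) (∂_j T⁰(x) + ∂_{y_j} T⁽¹⁾(x, y) + ε ∂_{x_j} T⁽¹⁾(x, y))`, where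
`T⁽¹⁾(x, y) = M_α(y) ∂_α T⁰(x)`. -/
noncomputable def fotsFlux (k : Fin n → Fin n → (Fin n → ℝ) → ℝ) (M : Fin n → (Fin n → ℝ) → ℝ)
    (T0 : (Fin n → ℝ) → ℝ) (ε : ℝ) (i : Fin n) (x y : Fin n → ℝ) : ℝ :=
  ∑ j, k i j y * (pd j T0 x + ∑ α, pd j (M α) y * pd α T0 x)
    + ε * ∑ j, k i j y * ∑ α, M α y * pd j (pd α T0) x

/-- The cell equations say that each `y ↦ k(y) (e_α + ∇M_α(y))` is divergence free; this is
their combination with coefficients `g`. -/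
theorem sum_pd_cellFlux_eq_zero (hk : ∀ i j, DifferentiableAt ℝ (k i j) y)
    (hdM : ∀ α j, DifferentiableAt ℝ (pd j (M α)) y)
    (hcell : ∀ α, ∑ i, pd i (fun y' => ∑ j, k i j y' * pd j (M α) y') y
      = -∑ i, pd i (k i α) y)
    (g : Fin n → ℝ) :
    ∑ i, pd i (fun y' => ∑ j, k i j y' * (g j + ∑ α, pd j (M α) y' * g α)) y = 0 := by
  have hsplit : ∀ i, (fun y' => ∑ j, k i j y' * (g j + ∑ α, pd j (M α) y' * g α))
      = fun y' => ∑ j, k i j y' * g j + ∑ α, (∑ j, k i j y' * pd j (M α) y') * g α := by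
    intro i
    funext y'
    simp only [mul_add, Finset.sum_add_distrib, Finset.mul_sum, Finset.sum_mul]
    rw [Finset.sum_comm (f := fun j α => k i j y' * (pd j (M α) y' * g α))]
    simp only [mul_assoc]
  have hdiv : ∀ i, pd i (fun y' => ∑ j, k i j y' * (g j + ∑ α, pd j (M α) y' * g α)) y
      = ∑ j, pd i (k i j) y * g j
        + ∑ α, pd i (fun y' => ∑ j, k i j y' * pd j (M α) y') y * g α := by
    intro i
    rw [hsplit, pd_add (by fun_prop) (by fun_prop), pd_sum_mul_const _ fun j _ => hk i j,
      pd_sum_mul_const _ fun α _ => by fun_prop]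
  rw [Finset.sum_congr rfl fun i _ => hdiv i, Finset.sum_add_distrib,
    Finset.sum_comm (f := fun i α => pd i (fun y' => ∑ j, k i j y' * pd j (M α) y') y * g α)]
  simp only [← Finset.sum_mul, hcell, neg_mul, Finset.sum_neg_distrib]
  rw [Finset.sum_comm]
  simp only [Finset.sum_mul, add_neg_cancel]

theorem pd_fotsApprox (hε : ε ≠ 0) (hM : ∀ α, Differentiable ℝ (M α))
    (hT0 : ContDiffAt ℝ 2 T0 x) (j : Fin n) :
    pd j (fun x' => T0 x' + ε * ∑ α, M α (ε⁻¹ • x') * pd α T0 x') x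
      = pd j T0 x + ∑ α, pd j (M α) (ε⁻¹ • x) * pd α T0 x
        + ε * ∑ α, M α (ε⁻¹ • x) * pd j (pd α T0) x := by
  have hdT0 : ∀ α, DifferentiableAt ℝ (pd α T0) x :=
    fun α => (hT0.pd (m := 1) α).differentiableAt one_ne_zero
  have hT0x : DifferentiableAt ℝ T0 x := hT0.differentiableAt two_ne_zero
  have hchain := pd_comp_two_scale (i := j) (Φ := fun x' y' => ∑ α, M α y' * pd α T0 x') ε⁻¹
    (by fun_prop)
  beta_reduce at hchain
  rw [pd_add hT0x (by fun_prop), pd_const_mul _ (by fun_prop), hchain,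
    pd_sum_const_mul _ fun α _ => hdT0 α, pd_sum_mul_const _ fun α _ => (hM α).differentiableAt,
    mul_add, ← mul_assoc, mul_inv_cancel₀ hε, one_mul]
  ring

theorem residualFlux_eventuallyEq {Te : (Fin n → ℝ) → ℝ} (hε : ε ≠ 0)
    (hM : ∀ α, Differentiable ℝ (M α)) (hTe : ContDiffAt ℝ 1 Te x) (hT0 : ContDiffAt ℝ 2 T0 x)
    (i : Fin n) :
    (fun x' => ∑ j, k i j (ε⁻¹ • x') * pd j (fun x'' => Te x''
        - (T0 x'' + ε * ∑ α, M α (ε⁻¹ • x'') * pd α T0 x'')) x')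
      =ᶠ[𝓝 x] fun x' =>
        ∑ j, k i j (ε⁻¹ • x') * pd j Te x' - fotsFlux k M T0 ε i x' (ε⁻¹ • x') := by
  filter_upwards [hTe.eventually (by simp), hT0.eventually (by simp)] with z hTez hT0z
  have hdT0 : ∀ α, DifferentiableAt ℝ (pd α T0) z :=
    fun α => (hT0z.pd (m := 1) α).differentiableAt one_ne_zero
  have hT0z' : DifferentiableAt ℝ T0 z := hT0z.differentiableAt two_ne_zero
  have hgrad : ∀ j, pd j (fun x'' => Te x''
      - (T0 x'' + ε * ∑ α, M α (ε⁻¹ • x'') * pd α T0 x'')) z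
      = pd j Te z - (pd j T0 z + ∑ α, pd j (M α) (ε⁻¹ • z) * pd α T0 z
        + ε * ∑ α, M α (ε⁻¹ • z) * pd j (pd α T0) z) := fun j => by
    rw [pd_sub (hTez.differentiableAt one_ne_zero) (by fun_prop), pd_fotsApprox hε hM hT0z]
  rw [fotsFlux, Finset.mul_sum, ← Finset.sum_add_distrib, ← Finset.sum_sub_distrib]
  refine Finset.sum_congr rfl fun j _ => ?_
  rw [hgrad]
  ring

theorem differentiableAt_uncurry_fotsFlux (hk : ∀ i j, Differentiable ℝ (k i j))
    (hM : ∀ α, Differentiable ℝ (M α)) (hdM : ∀ α j, Differentiable ℝ (pd j (M α)))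
    (hT0 : ContDiffAt ℝ 3 T0 x) (i : Fin n) :
    DifferentiableAt ℝ (Function.uncurry (fotsFlux k M T0 ε i)) (x, y) := by
  have hdT0 : ∀ α, DifferentiableAt ℝ (pd α T0) x :=
    fun α => (hT0.pd (m := 2) α).differentiableAt two_ne_zero
  have hd2T0 : ∀ j α, DifferentiableAt ℝ (pd j (pd α T0)) x :=
    fun j α => ((hT0.pd (m := 2) α).pd (m := 1) j).differentiableAt one_ne_zero
  unfold fotsFlux
  fun_prop

theorem pd_residualFlux {Te : (Fin n → ℝ) → ℝ} (hε : ε ≠ 0) (hk : ∀ i j, Differentiable ℝ (k i j))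
    (hM : ∀ α, Differentiable ℝ (M α)) (hdM : ∀ α j, Differentiable ℝ (pd j (M α)))
    (hTe : ContDiffAt ℝ 2 Te x) (hT0 : ContDiffAt ℝ 3 T0 x) (i : Fin n) :
    pd i (fun x' => ∑ j, k i j (ε⁻¹ • x') * pd j (fun x'' => Te x''
        - (T0 x'' + ε * ∑ α, M α (ε⁻¹ • x'') * pd α T0 x'')) x') x
      = pd i (fun x' => ∑ j, k i j (ε⁻¹ • x') * pd j Te x') x
        - (pd i (fun x' => fotsFlux k M T0 ε i x' (ε⁻¹ • x)) x
          + ε⁻¹ * pd i (fotsFlux k M T0 ε i x) (ε⁻¹ • x)) := by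
  have hdTe : ∀ j, DifferentiableAt ℝ (pd j Te) x :=
    fun j => (hTe.pd (m := 1) j).differentiableAt one_ne_zero
  have hΦ := differentiableAt_uncurry_fotsFlux (ε := ε) (y := ε⁻¹ • x) hk hM hdM hT0 i
  rw [pd_congr_of_eventuallyEq (residualFlux_eventuallyEq hε hM (hTe.of_le one_le_two)
      (hT0.of_le (by norm_num)) i),
    pd_sub (by fun_prop) (hΦ.comp_two_scale _), pd_comp_two_scale _ hΦ]

theorem pd_fotsFlux_fst (hM : ∀ α, Differentiable ℝ (M α)) (hT0 : ContDiffAt ℝ 3 T0 x)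
    (i : Fin n) :
    pd i (fun x' => fotsFlux k M T0 ε i x' y) x
      = pd i (fun x' => ∑ j, k i j y * pd j T0 x') x
        + pd i (fun x' => ∑ j, k i j y * pd j (fun y' => ∑ α, M α y' * pd α T0 x') y) x
        + ε * pd i (fun x' => ∑ j, k i j y * pd j (fun x'' => ∑ α, M α y * pd α T0 x'') x') x := by
  have hdT0 : ∀ α, DifferentiableAt ℝ (pd α T0) x :=
    fun α => (hT0.pd (m := 2) α).differentiableAt two_ne_zero
  have hd2T0 : ∀ j α, DifferentiableAt ℝ (pd j (pd α T0)) x :=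
    fun j α => ((hT0.pd (m := 2) α).pd (m := 1) j).differentiableAt one_ne_zero
  have hfast : (fun x' => ∑ j, k i j y * pd j (fun y' => ∑ α, M α y' * pd α T0 x') y)
      = fun x' => ∑ j, k i j y * ∑ α, pd j (M α) y * pd α T0 x' := by
    funext x'
    simp only [pd_sum_mul_const _ fun α _ => (hM α).differentiableAt]
  have hslow : (fun x' => ∑ j, k i j y * pd j (fun x'' => ∑ α, M α y * pd α T0 x'') x')
      =ᶠ[𝓝 x] fun x' => ∑ j, k i j y * ∑ α, M α y * pd j (pd α T0) x' := by
    filter_upwards [hT0.eventually (by simp)] with z hz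
    simp only [pd_sum_const_mul _ fun α _ => (hz.pd (m := 2) α).differentiableAt two_ne_zero]
  rw [hfast, pd_congr_of_eventuallyEq hslow, ← pd_add (by fun_prop) (by fun_prop),
    ← pd_const_mul _ (by fun_prop), ← pd_add (by fun_prop) (by fun_prop)]
  simp only [fotsFlux, mul_add, Finset.sum_add_distrib]

theorem sum_pd_fotsFlux_snd (hk : ∀ i j, Differentiable ℝ (k i j))
    (hM : ∀ α, Differentiable ℝ (M α)) (hdM : ∀ α j, Differentiable ℝ (pd j (M α)))
    (hcell : ∀ α, ∑ i, pd i (fun y' => ∑ j, k i j y' * pd j (M α) y') y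
      = -∑ i, pd i (k i α) y)
    (hdT0 : ∀ α, DifferentiableAt ℝ (pd α T0) x) :
    ∑ i, pd i (fotsFlux k M T0 ε i x) y
      = ε * ∑ i, pd i (fun y' =>
          ∑ j, k i j y' * pd j (fun x' => ∑ α, M α y' * pd α T0 x') x) y := by
  have hslow : ∀ i, (fun y' => ∑ j, k i j y' * pd j (fun x' => ∑ α, M α y' * pd α T0 x') x)
      = fun y' => ∑ j, k i j y' * ∑ α, M α y' * pd j (pd α T0) x := by
    intro i
    funext y'
    simp only [pd_sum_const_mul _ fun α _ => hdT0 α]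
  have hsplit : ∀ i, pd i (fotsFlux k M T0 ε i x) y
      = pd i (fun y' => ∑ j, k i j y' * (pd j T0 x + ∑ α, pd j (M α) y' * pd α T0 x)) y
        + ε * pd i (fun y' => ∑ j, k i j y' * ∑ α, M α y' * pd j (pd α T0) x) y := by
    intro i
    rw [← pd_const_mul _ (by fun_prop), ← pd_add (by fun_prop) (by fun_prop)]
    rfl
  simp only [hsplit, hslow, Finset.sum_add_distrib, ← Finset.mul_sum,
    sum_pd_cellFlux_eq_zero (fun i j => (hk i j).differentiableAt)
      (fun α j => (hdM α j).differentiableAt) hcell, zero_add]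

end TwoScale

theorem fots_residual_equation_general (n : ℕ)
    (Ω : Set (Fin n → ℝ)) (hΩ : IsOpen Ω)
    (k : Fin n → Fin n → (Fin n → ℝ) → ℝ)
    (hk : ∀ i j, ContDiff ℝ 1 (k i j))
    (h : (Fin n → ℝ) → ℝ)
    (khat : Fin n → Fin n → ℝ)
    (ε : ℝ) (hε : 0 < ε)
    (Te : (Fin n → ℝ) → ℝ) (hTe : ContDiffOn ℝ 2 Te Ω)
    -- (a) the heterogeneous equation on Ω:
    (hTeeq : ∀ x ∈ Ω,
      -∑ i, pd i (fun x' => ∑ j, k i j (ε⁻¹ • x') * pd j Te x') x = h x)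
    (T0 : (Fin n → ℝ) → ℝ) (hT0 : ContDiffOn ℝ 3 T0 Ω)
    -- (b) the homogenized equation with constant coefficients k̂ on Ω:
    (hT0eq : ∀ x ∈ Ω, -∑ i, ∑ j, khat i j * pd i (pd j T0) x = h x)
    (M : Fin n → (Fin n → ℝ) → ℝ)
    (hM : ∀ α, ContDiff ℝ 2 (M α))
    -- (c) the first-order cell equations:
    (hcell : ∀ (α : Fin n) (y : Fin n → ℝ),
      ∑ i, pd i (fun y' => ∑ j, k i j y' * pd j (M α) y') y
        = -∑ i, pd i (k i α) y) :
    ∀ x ∈ Ω,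
      -∑ i, pd i (fun x' => ∑ j, k i j (ε⁻¹ • x') *
          pd j (fun x'' => Te x''
            - (T0 x'' + ε * ∑ α, M α (ε⁻¹ • x'') * pd α T0 x'')) x') x
      =
      -- F₀(x, x/ε)
      ((-∑ i, ∑ j, khat i j * pd i (pd j T0) x)
        + (∑ i, pd i (fun x' => ∑ j, k i j (ε⁻¹ • x) * pd j T0 x') x)
        + (∑ i, pd i (fun x' => ∑ j, k i j (ε⁻¹ • x) *
            pd j (fun y' => ∑ α, M α y' * pd α T0 x') (ε⁻¹ • x)) x)
        + (∑ i, pd i (fun y' => ∑ j, k i j y' *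
            pd j (fun x' => ∑ α, M α y' * pd α T0 x') x) (ε⁻¹ • x)))
      +
      -- ε F₁(x, x/ε)
      ε * (∑ i, pd i (fun x' => ∑ j, k i j (ε⁻¹ • x) *
            pd j (fun x'' => ∑ α, M α (ε⁻¹ • x) * pd α T0 x'') x') x) := by
  intro x hx
  have hT03 : ContDiffAt ℝ 3 T0 x := hT0.contDiffAt (hΩ.mem_nhds hx)
  have hkD : ∀ i j, Differentiable ℝ (k i j) := fun i j => (hk i j).differentiable one_ne_zero
  have hMD : ∀ α, Differentiable ℝ (M α) := fun α => (hM α).differentiable two_ne_zero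
  have hdMD : ∀ α j, Differentiable ℝ (pd j (M α)) :=
    fun α j => ((hM α).pd (m := 1) j).differentiable one_ne_zero
  have hdT0 : ∀ α, DifferentiableAt ℝ (pd α T0) x :=
    fun α => (hT03.pd (m := 2) α).differentiableAt two_ne_zero
  simp only [pd_residualFlux hε.ne' hkD hMD hdMD (hTe.contDiffAt (hΩ.mem_nhds hx)) hT03,
    pd_fotsFlux_fst hMD hT03, Finset.sum_sub_distrib, Finset.sum_add_distrib, ← Finset.mul_sum,
    sum_pd_fotsFlux_snd hkD hMD hdMD (fun α => hcell α _) hdT0, inv_mul_cancel_left₀ hε.ne']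
  linear_combination hTeeq x hx - hT0eq x hx

/-- **FOTS residual equation.**  With `T^{(1ε)}(x) = T⁰(x) + ε M_α(x/ε)∂_α T⁰(x)` and
residual `T_Δ^{(1ε)} = T^ε − T^{(1ε)}`, one has, pointwise on `Ω`,
`−∂_i(k_{ij}(x/ε)∂_j T_Δ^{(1ε)}) = F₀(x,x/ε) + ε F₁(x,x/ε)`; in particular the FOTS
residual is of order `O(1)` in the pointwise sense. -/
theorem fots_residual_equation (n : ℕ) (hn : 1 ≤ n)
    (Ω : Set (Fin n → ℝ)) (hΩ : IsOpen Ω)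
    (k : Fin n → Fin n → (Fin n → ℝ) → ℝ)
    (hk : ∀ i j, ContDiff ℝ 1 (k i j))
    (h : (Fin n → ℝ) → ℝ)
    (khat : Fin n → Fin n → ℝ)
    (ε : ℝ) (hε : 0 < ε)
    (Te : (Fin n → ℝ) → ℝ) (hTe : ContDiffOn ℝ 2 Te Ω)
    -- (a) the heterogeneous equation on Ω:
    (hTeeq : ∀ x ∈ Ω,
      -∑ i, pd i (fun x' => ∑ j, k i j (ε⁻¹ • x') * pd j Te x') x = h x)
    (T0 : (Fin n → ℝ) → ℝ) (hT0 : ContDiffOn ℝ 3 T0 Ω)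
    -- (b) the homogenized equation with constant coefficients k̂ on Ω:
    (hT0eq : ∀ x ∈ Ω, -∑ i, ∑ j, khat i j * pd i (pd j T0) x = h x)
    (M : Fin n → (Fin n → ℝ) → ℝ)
    (hM : ∀ α, ContDiff ℝ 2 (M α))
    -- (c) the first-order cell equations:
    (hcell : ∀ (α : Fin n) (y : Fin n → ℝ),
      ∑ i, pd i (fun y' => ∑ j, k i j y' * pd j (M α) y') y
        = -∑ i, pd i (k i α) y) :
    ∀ x ∈ Ω,
      -∑ i, pd i (fun x' => ∑ j, k i j (ε⁻¹ • x') *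
          pd j (fun x'' => Te x''
            - (T0 x'' + ε * ∑ α, M α (ε⁻¹ • x'') * pd α T0 x'')) x') x
      =
      -- F₀(x, x/ε)
      ((-∑ i, ∑ j, khat i j * pd i (pd j T0) x)
        + (∑ i, pd i (fun x' => ∑ j, k i j (ε⁻¹ • x) * pd j T0 x') x)
        + (∑ i, pd i (fun x' => ∑ j, k i j (ε⁻¹ • x) *
            pd j (fun y' => ∑ α, M α y' * pd α T0 x') (ε⁻¹ • x)) x)
        + (∑ i, pd i (fun y' => ∑ j, k i j y' *
            pd j (fun x' => ∑ α, M α y' * pd α T0 x') x) (ε⁻¹ • x)))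
      +
      -- ε F₁(x, x/ε)
      ε * (∑ i, pd i (fun x' => ∑ j, k i j (ε⁻¹ • x) *
            pd j (fun x'' => ∑ α, M α (ε⁻¹ • x) * pd α T0 x'') x') x) :=
  fots_residual_equation_general n Ω hΩ k hk h khat ε hε Te hTe hTeeq T0 hT0 hT0eq M hM hcell
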